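/- arXiv:1009.1851 — 5 statements merged into one kernel-verified Lean document; each statement's English description precedes it below -/
import Mathlib

section
/- For any path-connected space X and n ≥ 2, the Lusternik–Schnirelmann category of X^{n-1} is a lower bound for the n-th topological complexity: cat(X^{n-1}) ≤ TC_n(X). -/
noncomputable section


/-- The space of "multipaths": `n` paths in `X` with a common initial point.  This is the
space `X^{J_n}` of continuous maps from the wedge `J_n` of `n` unit intervals to `X`. -/
abbrev MultiPath (n : ℕ) (X : Type*) [TopologicalSpace X] :=
  {f : Fin n → C(unitInterval, X) // ∀ i j : Fin n, f i 0 = f j 0}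

/-- The endpoint-evaluation fibration `e_n : X^{J_n} → X^n`. -/
def endpointsMap (n : ℕ) (X : Type*) [TopologicalSpace X] :
    C(MultiPath n X, Fin n → X) :=
  ⟨fun f i => f.1 i 1, by
    apply continuous_pi
    intro i
    exact (continuous_eval_const (1 : unitInterval)).comp
      ((continuous_apply i).comp continuous_subtype_val)⟩

/-- The diagonal map `d_n : X → X^n`. -/
def diagMap (n : ℕ) (X : Type*) [TopologicalSpace X] : C(X, Fin n → X) :=
  ⟨fun x _ => x, continuous_pi fun _ => continuous_id⟩

/-- `secatLE p k` : the base of `p` can be covered by `k+1` open sets, each admitting a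
continuous (strict) local section of `p`. -/
def secatLE {E B : Type*} [TopologicalSpace E] [TopologicalSpace B]
    (p : C(E, B)) (k : ℕ) : Prop :=
  ∃ U : Fin (k + 1) → Set B, (∀ i, IsOpen (U i)) ∧ (⋃ i, U i) = Set.univ ∧
    ∀ i, ∃ s : C(U i, E), ∀ x : U i, p (s x) = (x : B)

/-- The (normalized) sectional category / Schwarz genus of a fibration, via strict local
sections. -/
def secat {E B : Type*} [TopologicalSpace E] [TopologicalSpace B] (p : C(E, B)) : ℕ∞ :=
  sInf ((fun k : ℕ => (k : ℕ∞)) '' {k | secatLE p k})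

/-- `genusLE f k` : the target of `f` can be covered by `k+1` open sets, each admitting a
continuous local homotopy section of `f` (this computes the Schwarz genus of an arbitrary
map, i.e. of its fibrational substitute). -/
def genusLE {E B : Type*} [TopologicalSpace E] [TopologicalSpace B]
    (f : C(E, B)) (k : ℕ) : Prop :=
  ∃ U : Fin (k + 1) → Set B, (∀ i, IsOpen (U i)) ∧ (⋃ i, U i) = Set.univ ∧
    ∀ i, ∃ s : C(U i, E), ContinuousMap.Homotopic (f.comp s)
      ⟨fun x : U i => (x : B), continuous_subtype_val⟩

/-- The (normalized) Schwarz genus of an arbitrary continuous map, defined via local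
homotopy sections (equivalently, via a fibrational substitute). -/
def schwarzGenus {E B : Type*} [TopologicalSpace E] [TopologicalSpace B] (f : C(E, B)) : ℕ∞ :=
  sInf ((fun k : ℕ => (k : ℕ∞)) '' {k | genusLE f k})

/-- The `n`-th (normalized) topological complexity: the Schwarz genus of the endpoint
evaluation fibration `e_n : X^{J_n} → X^n`. -/
def TCn (n : ℕ) (X : Type*) [TopologicalSpace X] : ℕ∞ := secat (endpointsMap n X)

/-- `catLE Y k` : `Y` is covered by `k+1` open sets, each contractible in `Y`. -/
def catLE (Y : Type*) [TopologicalSpace Y] (k : ℕ) : Prop :=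
  ∃ U : Fin (k + 1) → Set Y, (∀ i, IsOpen (U i)) ∧ (⋃ i, U i) = Set.univ ∧
    ∀ i, ∃ y : Y, ContinuousMap.Homotopic
      ⟨fun x : U i => (x : Y), continuous_subtype_val⟩ (ContinuousMap.const _ y)

/-- The normalized Lusternik–Schnirelmann category. -/
def LScat (Y : Type*) [TopologicalSpace Y] : ℕ∞ :=
  sInf ((fun k : ℕ => (k : ℕ∞)) '' {k | catLE Y k})

/-! Fix `x₀ ∈ X` and embed `X^{n-1}` into `X^n` as `x ↦ (x₀, x)`. Over an open set `U ⊆ X^n` with a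
section `s` of `e_n`, each point `x` of the preimage `V` of `U` comes with `n` paths from a common
point, the first ending at `x₀` and the others at the coordinates of `x`. Running the last `n - 1`
paths backwards and then the first one forwards contracts `V` to `(x₀, …, x₀)` inside `X^{n-1}`,
continuously in `x`. So the cover of `X^n` pulls back to a categorical cover of `X^{n-1}`. -/

open ContinuousMap unitInterval

section

variable {V X : Type*} [TopologicalSpace V] [TopologicalSpace X]

theorem ContinuousMap.homotopic_eval_zero_eval_one (G : C(V, C(I, X))) :
    Homotopic ⟨fun v ↦ G v 0, by fun_prop⟩ ⟨fun v ↦ G v 1, by fun_prop⟩ :=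
  ⟨{ toFun := fun p ↦ G p.2 p.1
     continuous_toFun := by fun_prop
     map_zero_left := fun _ ↦ rfl
     map_one_left := fun _ ↦ rfl }⟩

theorem MultiPath.homotopic_endpoints {n : ℕ} (F : C(V, MultiPath n X)) (i j : Fin n) :
    Homotopic ((eval i).comp ((endpointsMap n X).comp F))
      ((eval j).comp ((endpointsMap n X).comp F)) := by
  let leg (k : Fin n) : C(V, C(I, X)) :=
    ⟨fun v ↦ (F v).1 k, (continuous_apply k).comp (continuous_subtype_val.comp F.continuous)⟩
  have start_eq :
      (⟨fun v ↦ leg i v 0, by fun_prop⟩ : C(V, X)) = ⟨fun v ↦ leg j v 0, by fun_prop⟩ :=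
    ext fun v ↦ (F v).2 i j
  exact ((homotopic_eval_zero_eval_one (leg i)).symm.trans (start_eq ▸ .refl _)).trans
    (homotopic_eval_zero_eval_one (leg j))

theorem MultiPath.homotopic_const_of_endpointsMap_eq_cons {m : ℕ} (x₀ : X)
    (g : C(V, Fin m → X)) (F : C(V, MultiPath (m + 1) X))
    (hF : ∀ v, endpointsMap (m + 1) X (F v) = Fin.cons x₀ (g v)) :
    Homotopic g (const V fun _ ↦ x₀) := by
  have hg : g = .pi fun k ↦ (eval k.succ).comp ((endpointsMap (m + 1) X).comp F) := by
    ext v k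
    simp [hF]
  have hconst : const V (fun _ : Fin m ↦ x₀) =
      .pi fun _ : Fin m ↦ (eval 0).comp ((endpointsMap (m + 1) X).comp F) := by
    ext v k
    simp [hF]
  rw [hg, hconst]
  exact .pi fun k ↦ homotopic_endpoints F k.succ 0

theorem catLE_pi_of_secatLE_endpointsMap [Nonempty X] {m k : ℕ}
    (h : secatLE (endpointsMap (m + 1) X) k) : catLE (Fin m → X) k := by
  obtain ⟨x₀⟩ := ‹Nonempty X›
  let j : C(Fin m → X, Fin (m + 1) → X) :=
    ⟨fun x ↦ Fin.cons x₀ x, continuous_const.finCons continuous_id⟩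
  obtain ⟨U, hU_open, hU_cover, hU_section⟩ := h
  refine ⟨fun i ↦ j ⁻¹' U i, fun i ↦ (hU_open i).preimage j.continuous, ?_, fun i ↦ ?_⟩
  · rw [← Set.preimage_iUnion, hU_cover, Set.preimage_univ]
  · obtain ⟨s, hs⟩ := hU_section i
    exact ⟨fun _ ↦ x₀, MultiPath.homotopic_const_of_endpointsMap_eq_cons x₀ _
      (s.comp (j.restrictPreimage (U i))) fun v ↦ hs _⟩

end

theorem LScat_pi_le_TCn_succ (X : Type*) [TopologicalSpace X] [Nonempty X] (m : ℕ) :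
    LScat (Fin m → X) ≤ TCn (m + 1) X :=
  sInf_le_sInf (Set.image_mono fun _ ↦ catLE_pi_of_secatLE_endpointsMap)

/-- `cat(X^{n-1}) ≤ TC_n(X)` for a path-connected space `X` and `n ≥ 2`. -/
theorem cat_pow_le_TC (n : ℕ) (hn : 2 ≤ n) (X : Type*) [TopologicalSpace X]
    [PathConnectedSpace X] :
    LScat (Fin (n - 1) → X) ≤ TCn n X := by
  have : Nonempty X := PathConnectedSpace.nonempty
  simpa [Nat.sub_add_cancel (by omega : 1 ≤ n)] using LScat_pi_le_TCn_succ X (n - 1)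
end
end

section
/- For any path-connected topological group G and n ≥ 2, TC_n(G) ≤ cat(G^{n-1}). -/
noncomputable section


/-! A contraction of `U ⊆ G^{n-1}` to the identity gives, for each `a ∈ U`, a path from `1` to `a`
depending continuously on `a`. Over the open set of tuples `(g, g a_1, …, g a_{n-1})` with
`a ∈ U`, left translation by `g` turns these into `n` paths from the common point `g` to the
coordinates, i.e. a local section of `e_n`. Since `(g, a) ↦ (g, g a_1, …, g a_{n-1})` is a
homeomorphism `G × G^{n-1} ≅ G^n`, a categorical cover of `G^{n-1}` gives `n`-th motion planners
on an open cover of `G^n` with the same number of pieces. -/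

theorem exists_section_endpointsMap_of_homotopic {n : ℕ} {X : Type*} [TopologicalSpace X]
    {V : Set (Fin n → X)} {c : C(V, X)}
    (h : ((diagMap n X).comp c).Homotopic ⟨fun v : V => (v : Fin n → X), continuous_subtype_val⟩) :
    ∃ s : C(V, MultiPath n X), ∀ v, endpointsMap n X (s v) = v := by
  obtain ⟨H⟩ := h
  let path (i : Fin n) : C(V, C(unitInterval, X)) :=
    ContinuousMap.curry ⟨fun p : V × unitInterval => H (p.2, p.1) i, by fun_prop⟩
  refine ⟨⟨fun v => ⟨fun i => path i v, fun i j => ?_⟩, ?_⟩, fun v => ?_⟩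
  · simp only [path, ContinuousMap.curry_apply, ContinuousMap.coe_mk, H.apply_zero]
    rfl
  · exact (continuous_pi fun i => (path i).continuous).subtype_mk _
  · ext i
    simp [path, endpointsMap]

section Group

variable {G : Type*} [TopologicalSpace G] [Group G] [IsTopologicalGroup G] {m : ℕ}

variable (G m) in
def leftQuotients : C(Fin (m + 1) → G, Fin m → G) :=
  ⟨fun g j => (g 0)⁻¹ * g j.succ, by fun_prop⟩

variable (G m) in
def consTranslate : C(G × (Fin m → G), Fin (m + 1) → G) :=
  ⟨fun p => Fin.cons p.1 fun j => p.1 * p.2 j,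
    continuous_pi fun j => Fin.cases (by fun_prop) (fun j => by fun_prop) j⟩

theorem consTranslate_leftQuotients (g : Fin (m + 1) → G) :
    consTranslate G m (g 0, leftQuotients G m g) = g := by
  ext j
  cases j using Fin.cases <;> simp [consTranslate, leftQuotients]

theorem consTranslate_one (g : G) : consTranslate G m (g, 1) = fun _ => g := by
  ext j
  cases j using Fin.cases <;> simp [consTranslate]

theorem homotopic_diagMap_of_homotopic_const_one {U : Set (Fin m → G)}
    (hU : ContinuousMap.Homotopic ⟨fun a : U => (a : Fin m → G), continuous_subtype_val⟩
      (ContinuousMap.const _ 1)) :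
    ((diagMap (m + 1) G).comp ⟨fun g : leftQuotients G m ⁻¹' U => (g : Fin (m + 1) → G) 0,
      (continuous_apply 0).comp continuous_subtype_val⟩).Homotopic
      ⟨fun g : leftQuotients G m ⁻¹' U => (g : Fin (m + 1) → G), continuous_subtype_val⟩ := by
  let base : C(leftQuotients G m ⁻¹' U, G) :=
    ⟨fun g => (g : Fin (m + 1) → G) 0, (continuous_apply 0).comp continuous_subtype_val⟩
  obtain ⟨H⟩ := hU.symm.comp (.refl (leftQuotients G m |>.restrictPreimage U))
  convert (ContinuousMap.Homotopic.refl (consTranslate G m)).comp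
    ⟨(ContinuousMap.Homotopy.refl base).prod H⟩ using 1
  · ext g : 1
    exact (consTranslate_one _).symm
  · ext g : 1
    exact (consTranslate_leftQuotients _).symm

theorem secatLE_endpointsMap_succ_of_catLE [PathConnectedSpace G] {k : ℕ}
    (h : catLE (Fin m → G) k) : secatLE (endpointsMap (m + 1) G) k := by
  obtain ⟨U, hU_open, hU_cover, hU_contr⟩ := h
  refine ⟨fun i => leftQuotients G m ⁻¹' U i, fun i => (hU_open i).preimage (map_continuous _),
    by simp [← Set.preimage_iUnion, hU_cover], fun i => ?_⟩
  obtain ⟨y, hy⟩ := hU_contr i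
  exact exists_section_endpointsMap_of_homotopic <| homotopic_diagMap_of_homotopic_const_one <|
    hy.trans ⟨(PathConnectedSpace.somePath y 1).toHomotopyConst⟩

end Group

/-- For a path-connected topological group `G` and `n ≥ 2`,
`TC_n(G) ≤ cat(G^{n-1})`. -/
theorem TC_le_cat_pow_of_group (n : ℕ) (hn : 2 ≤ n) (G : Type*) [TopologicalSpace G]
    [Group G] [IsTopologicalGroup G] [PathConnectedSpace G] :
    TCn n G ≤ LScat (Fin (n - 1) → G) := by
  obtain ⟨m, rfl⟩ : ∃ m, n = m + 1 := ⟨n - 1, by omega⟩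
  exact sInf_le_sInf <| Set.image_mono fun k => secatLE_endpointsMap_succ_of_catLE
end
end

section
/- For any path-connected topological group G and n ≥ 2, TC_n(G) = cat(G^{n-1}). -/
noncomputable section


/-! A local section of `e_n` over `U ⊆ X^n` is a family of paths from a common point to the
coordinates, i.e. a deformation of `U` into the diagonal. Pulling such a deformation back along
`x ↦ (x₀, x)` and then sliding the common point to `x₀` along the first path contracts the
preimage in `X^{n-1}`, so `cat(X^{n-1}) ≤ TC_n(X)` for every space `X`. In a path-connected
group, a contraction of `V ⊆ G^{n-1}` to `c`, preceded by a path from `1` to `c` and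
translated by `g₀`, deforms `{g | (g_j g₀⁻¹)_j ∈ V}` into the diagonal, which gives the reverse
inequality. -/

open ContinuousMap Set

section Space

variable {X : Type*} [TopologicalSpace X]

theorem exists_section_endpointsMap_iff {n : ℕ} [NeZero n] (U : Set (Fin n → X)) :
    (∃ s : C(U, MultiPath n X), ∀ x, endpointsMap n X (s x) = x) ↔
      ∃ h : C(U, X), Homotopic ((diagMap n X).comp h) ((ContinuousMap.id _).restrict U) := by
  constructor
  · rintro ⟨s, hs⟩
    have hs_cont (i : Fin n) : Continuous fun x => (s x).1 i :=
      (continuous_apply i).comp (continuous_subtype_val.comp s.continuous)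
    refine ⟨⟨fun x => (s x).1 0 0, (continuous_eval_const 0).comp (hs_cont 0)⟩, ⟨
      { toFun := fun p i => (s p.2).1 i p.1
        continuous_toFun := continuous_pi fun i =>
          continuous_eval.comp (((hs_cont i).comp continuous_snd).prodMk continuous_fst)
        map_zero_left := fun x => funext fun i => (s x).2 i 0
        map_one_left := fun x => hs x }⟩⟩
  · rintro ⟨h, ⟨H⟩⟩
    refine ⟨⟨fun x => ⟨fun i => ⟨fun t => H (t, x) i, by fun_prop⟩, fun i j => ?_⟩, ?_⟩,
      fun x => funext fun i => ?_⟩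
    · change H (0, x) i = H (0, x) j
      rw [H.apply_zero]
      rfl
    · refine (continuous_pi fun i => continuous_of_continuous_uncurry _ ?_).subtype_mk _
      exact ((continuous_apply i).comp H.continuous).comp continuous_swap
    · change H (1, x) i = x.1 i
      rw [H.apply_one]
      rfl

theorem homotopic_const_of_homotopic_diagMap {m : ℕ} (x₀ : X) {U : Set (Fin (m + 1) → X)}
    {h : C(U, X)} (hU : Homotopic ((diagMap (m + 1) X).comp h) ((ContinuousMap.id _).restrict U)) :
    Homotopic ((ContinuousMap.id _).restrict (Matrix.vecCons x₀ ⁻¹' U : Set (Fin m → X)))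
      (const _ fun _ => x₀) := by
  let cons : C(Fin m → X, Fin (m + 1) → X) := ⟨Matrix.vecCons x₀, by fun_prop⟩
  let tail : C(Fin (m + 1) → X, Fin m → X) :=
    ⟨Matrix.vecTail, continuous_pi fun i => continuous_apply _⟩
  let head : C(Fin (m + 1) → X, X) := ⟨Matrix.vecHead, continuous_apply 0⟩
  let j := cons.restrictPreimage U
  have hUj := hU.comp (Homotopic.refl j)
  have h_tail : Homotopic ((ContinuousMap.id _).restrict _) ((diagMap m X).comp (h.comp j)) := by
    convert ((Homotopic.refl tail).comp hUj).symm using 1 <;> rfl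
  have h_head : Homotopic (h.comp j) (const _ x₀) := by
    convert (Homotopic.refl head).comp hUj using 1 <;> rfl
  exact h_tail.trans ((Homotopic.refl (diagMap m X)).comp h_head)

theorem catLE_of_secatLE_endpointsMap (x₀ : X) {m k : ℕ}
    (h : secatLE (endpointsMap (m + 1) X) k) : catLE (Fin m → X) k := by
  obtain ⟨U, hU_open, hU_cover, hU_section⟩ := h
  have hcons : Continuous (Matrix.vecCons x₀ : (Fin m → X) → Fin (m + 1) → X) := by fun_prop
  refine ⟨fun i => Matrix.vecCons x₀ ⁻¹' U i, fun i => (hU_open i).preimage hcons,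
    by rw [← preimage_iUnion, hU_cover, preimage_univ], fun i => ?_⟩
  obtain ⟨h, hh⟩ := (exists_section_endpointsMap_iff (U i)).1 (hU_section i)
  exact ⟨_, homotopic_const_of_homotopic_diagMap x₀ hh⟩

end Space

section Group

def divHead (m : ℕ) (G : Type*) [TopologicalSpace G] [Group G] [IsTopologicalGroup G] :
    C(Fin (m + 1) → G, Fin m → G) :=
  ⟨fun g j => g j.succ / g 0, by fun_prop⟩

@[simp]
theorem divHead_apply {m : ℕ} {G : Type*} [TopologicalSpace G] [Group G] [IsTopologicalGroup G]
    (g : Fin (m + 1) → G) (j : Fin m) : divHead m G g j = g j.succ / g 0 :=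
  rfl

variable {G : Type*} [TopologicalSpace G] [Group G] [IsTopologicalGroup G]

theorem exists_homotopic_diagMap_of_homotopic_const [PathConnectedSpace G] {m : ℕ}
    {V : Set (Fin m → G)} {c : Fin m → G}
    (hV : Homotopic ((ContinuousMap.id _).restrict V) (const _ c)) :
    ∃ h : C(divHead m G ⁻¹' V, G),
      Homotopic ((diagMap (m + 1) G).comp h) ((ContinuousMap.id _).restrict _) := by
  obtain ⟨K⟩ : Homotopic (const V 1) ((ContinuousMap.id _).restrict V) :=
    Homotopic.trans ⟨(PathConnectedSpace.somePath 1 c).toHomotopyConst⟩ hV.symm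
  let r := (divHead m G).restrictPreimage V
  have hK : Continuous fun p : unitInterval × (divHead m G ⁻¹' V) => K (p.1, r p.2) := by
    fun_prop
  have h_head : Continuous fun g : divHead m G ⁻¹' V => g.1 0 :=
    (continuous_apply 0).comp continuous_subtype_val
  refine ⟨⟨fun g => g.1 0, h_head⟩, ⟨
    { toFun := fun p => Matrix.vecCons 1 (K (p.1, r p.2)) * fun _ => p.2.1 0
      continuous_toFun :=
        (continuous_const.matrixVecCons hK).mul (continuous_pi fun _ => h_head.comp continuous_snd)
      map_zero_left := fun g => ?_
      map_one_left := fun g => ?_ }⟩⟩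
  · ext i
    refine Fin.cases ?_ (fun j => ?_) i <;> simp [K.apply_zero, diagMap]
  · ext i
    refine Fin.cases ?_ (fun j => ?_) i <;> simp [K.apply_one, r]

theorem secatLE_endpointsMap_of_catLE [PathConnectedSpace G] {m k : ℕ}
    (h : catLE (Fin m → G) k) : secatLE (endpointsMap (m + 1) G) k := by
  obtain ⟨V, hV_open, hV_cover, hV_contr⟩ := h
  refine ⟨fun i => divHead m G ⁻¹' V i, fun i => (hV_open i).preimage (divHead m G).continuous,
    by rw [← preimage_iUnion, hV_cover, preimage_univ], fun i => ?_⟩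
  obtain ⟨c, hc⟩ := hV_contr i
  exact (exists_section_endpointsMap_iff _).2 (exists_homotopic_diagMap_of_homotopic_const hc)

end Group

/-- For a path-connected topological group `G` and `n ≥ 2`,
`TC_n(G) = cat(G^{n-1})`. -/
theorem TC_eq_cat_pow_of_group (n : ℕ) (hn : 2 ≤ n) (G : Type*) [TopologicalSpace G]
    [Group G] [IsTopologicalGroup G] [PathConnectedSpace G] :
    TCn n G = LScat (Fin (n - 1) → G) := by
  obtain ⟨m, rfl⟩ : ∃ m, n = m + 1 := ⟨n - 1, by omega⟩
  have h_levels : {k | secatLE (endpointsMap (m + 1) G) k} = {k | catLE (Fin m → G) k} :=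
    Set.ext fun _ => ⟨catLE_of_secatLE_endpointsMap 1, secatLE_endpointsMap_of_catLE⟩
  change secat (endpointsMap (m + 1) G) = LScat (Fin m → G)
  simp only [secat, LScat, h_levels]
end
end

section
/- Let G be a path-connected topological group all of whose finite cartesian powers are normal topological spaces. Then for every n ≥ 3, TC_n(G) − TC_{n-1}(G) ≤ cat(G). -/
noncomputable section


/-!
Write `w ∈ G^(m+2)` as `(w', w_last)` with `w' ∈ G^(m+1)`. Where `w'` has a multipath section `σ`
and `(w 0)⁻¹ * w_last` lies in a set `V` contracting onto `1` in `G`, the pointwise product of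
the path `σ 0` (ending at `w 0`) with the contraction path from `1` to `(w 0)⁻¹ * w_last` is one
more path with the same starting point, ending at `w_last`. So the intersections of the pullbacks
of an `(a+1)`-set cat-cover of `G` and a `(b+1)`-set `TC_{m+1}`-cover of `G^(m+1)` carry local
sections. On a normal space these intersections regroup into `a+b+1` open sets, each a disjoint
union of open pieces of them: for partitions of unity `f`, `g` subordinate to the two covers, take
the regions where the products `f i * g j` with `(i, j) ∈ S ×ˢ T` are positive and strictly larger
than all others; for a fixed value of `#S + #T` these regions are pairwise disjoint.
-/

open Set Function Topology Finset unitInterval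

section LocalSection

variable {E B : Type*} [TopologicalSpace E] [TopologicalSpace B]

def HasLocalSection (p : C(E, B)) (S : Set B) : Prop :=
  ∃ s : C(S, E), ∀ x : S, p (s x) = x

theorem HasLocalSection.mono {p : C(E, B)} {S T : Set B} (hT : HasLocalSection p T)
    (hST : S ⊆ T) : HasLocalSection p S :=
  let ⟨s, hs⟩ := hT
  ⟨s.comp ⟨inclusion hST, continuous_inclusion hST⟩, fun _ => hs _⟩

theorem HasLocalSection.iUnion {p : C(E, B)} {ι : Type*} {t : ι → Set B}
    (ht : ∀ i, IsOpen (t i)) (hd : Pairwise (Disjoint on t))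
    (hs : ∀ i, HasLocalSection p (t i)) : HasLocalSection p (⋃ i, t i) := by
  choose s hs using hs
  let S : ι → Set ↥(⋃ i, t i) := fun i => (↑) ⁻¹' t i
  let φ : ∀ i, C(S i, E) := fun i => (s i).comp ⟨fun x => ⟨x.1, x.2⟩, by fun_prop⟩
  have hφ : ∀ i j x (hi : x ∈ S i) (hj : x ∈ S j), φ i ⟨x, hi⟩ = φ j ⟨x, hj⟩ := by
    intro i j _ hi hj
    obtain rfl : i = j := by_contra fun hij => disjoint_left.1 (hd hij) hi hj
    rfl
  have hS : ∀ x, ∃ i, S i ∈ 𝓝 x := fun x =>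
    let ⟨i, hi⟩ := mem_iUnion.1 x.2
    ⟨i, ((ht i).preimage continuous_subtype_val).mem_nhds hi⟩
  refine ⟨ContinuousMap.liftCover S φ hφ hS, fun x => ?_⟩
  obtain ⟨i, hi⟩ := mem_iUnion.1 x.2
  rw [ContinuousMap.liftCover_coe (i := i) ⟨x, hi⟩]
  exact hs i _

end LocalSection

section DominanceRegion

variable {ι X : Type*}

def dominanceRegion (c : ι → X → ℝ) (S : Finset ι) : Set X :=
  {x | ∀ i ∈ S, 0 < c i x ∧ ∀ j ∉ S, c j x < c i x}

theorem isOpen_dominanceRegion [TopologicalSpace X] [Finite ι] {c : ι → X → ℝ}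
    (hc : ∀ i, Continuous (c i)) (S : Finset ι) : IsOpen (dominanceRegion c S) := by
  simp only [dominanceRegion, ofPred_forall, ofPred_and]
  exact isOpen_iInter_of_finite fun i => isOpen_iInter_of_finite fun _ =>
    (isOpen_lt continuous_const (hc i)).inter <| isOpen_iInter_of_finite fun j =>
      isOpen_iInter_of_finite fun _ => isOpen_lt (hc j) (hc i)

theorem disjoint_dominanceRegion {c : ι → X → ℝ} {S T : Finset ι} (hST : ¬S ⊆ T)
    (hTS : ¬T ⊆ S) : Disjoint (dominanceRegion c S) (dominanceRegion c T) := by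
  obtain ⟨i, hiS, hiT⟩ := Finset.not_subset.1 hST
  obtain ⟨j, hjT, hjS⟩ := Finset.not_subset.1 hTS
  exact disjoint_left.2 fun x hS hT => ((hS i hiS).2 j hjS).not_gt ((hT j hjT).2 i hiT)

theorem mem_dominanceRegion_mul {κ : Type*} {f : ι → X → ℝ} {g : κ → X → ℝ} {x : X}
    {S : Finset ι} {T : Finset κ} (hS : ∀ i, i ∈ S ↔ ∀ s, f s x ≤ f i x)
    (hT : ∀ j, j ∈ T ↔ ∀ t, g t x ≤ g j x) (hf : ∀ i, 0 ≤ f i x) (hg : ∀ j, 0 ≤ g j x)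
    (hf₀ : ∃ i, 0 < f i x) (hg₀ : ∃ j, 0 < g j x) :
    x ∈ dominanceRegion (fun p y => f p.1 y * g p.2 y) (S ×ˢ T) := by
  intro ⟨i, j⟩ hij
  simp only [Finset.mem_product, hS, hT] at hij ⊢
  obtain ⟨hi, hj⟩ := hij
  have hfi : 0 < f i x := let ⟨s, hs⟩ := hf₀; hs.trans_le (hi s)
  have hgj : 0 < g j x := let ⟨t, ht⟩ := hg₀; ht.trans_le (hj t)
  refine ⟨mul_pos hfi hgj, fun ⟨s, t⟩ hst => ?_⟩
  simp only [not_and_or, not_forall, not_le] at hst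
  rcases hst with ⟨s', hs'⟩ | ⟨t', ht'⟩
  · calc f s x * g t x ≤ f s x * g j x := mul_le_mul_of_nonneg_left (hj t) (hf s)
      _ < f i x * g j x := mul_lt_mul_of_pos_right (hs'.trans_le (hi s')) hgj
  · calc f s x * g t x ≤ f i x * g t x := mul_le_mul_of_nonneg_right (hi s) (hg t)
      _ < f i x * g j x := mul_lt_mul_of_pos_left (ht'.trans_le (hj t')) hfi

end DominanceRegion

theorem Finset.eq_and_eq_of_product_subset_of_card_add_eq {α β : Type*} {S S' : Finset α}
    {T T' : Finset β} (hS : S.Nonempty) (hT : T.Nonempty) (h : S ×ˢ T ⊆ S' ×ˢ T')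
    (hcard : #S + #T = #S' + #T') : S = S' ∧ T = T' := by
  have hSS' : S ⊆ S' := fun i hi =>
    let ⟨j, hj⟩ := hT; (Finset.mem_product.1 (h (Finset.mk_mem_product hi hj))).1
  have hTT' : T ⊆ T' := fun j hj =>
    let ⟨i, hi⟩ := hS; (Finset.mem_product.1 (h (Finset.mk_mem_product hi hj))).2
  have := Finset.card_le_card hSS'
  have := Finset.card_le_card hTT'
  exact ⟨Finset.eq_of_subset_of_card_le hSS' (by omega),
    Finset.eq_of_subset_of_card_le hTT' (by omega)⟩

theorem disjoint_dominanceRegion_product {ι κ X : Type*} {c : ι × κ → X → ℝ} {S S' : Finset ι}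
    {T T' : Finset κ} (hS : S.Nonempty) (hT : T.Nonempty) (hS' : S'.Nonempty)
    (hT' : T'.Nonempty) (hcard : #S + #T = #S' + #T') (hne : (S, T) ≠ (S', T')) :
    Disjoint (dominanceRegion c (S ×ˢ T)) (dominanceRegion c (S' ×ˢ T')) := by
  refine disjoint_dominanceRegion (fun h => hne ?_) (fun h => hne ?_)
  · obtain ⟨rfl, rfl⟩ := Finset.eq_and_eq_of_product_subset_of_card_add_eq hS hT h hcard
    rfl
  · obtain ⟨rfl, rfl⟩ := Finset.eq_and_eq_of_product_subset_of_card_add_eq hS' hT' h hcard.symm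
    rfl

theorem exists_open_cover_of_inter_cover {X : Type*} [TopologicalSpace X] [NormalSpace X]
    (P : Set X → Prop) (hmono : ∀ {S T}, S ⊆ T → P T → P S)
    (hunion : ∀ {κ : Type} (t : κ → Set X), (∀ i, IsOpen (t i)) →
      Pairwise (Disjoint on t) → (∀ i, P (t i)) → P (⋃ i, t i))
    {a b : ℕ} (A : Fin (a + 1) → Set X) (B : Fin (b + 1) → Set X)
    (hAo : ∀ i, IsOpen (A i)) (hBo : ∀ j, IsOpen (B j))
    (hAc : ⋃ i, A i = univ) (hBc : ⋃ j, B j = univ) (hP : ∀ i j, P (A i ∩ B j)) :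
    ∃ W : Fin (a + b + 1) → Set X, (∀ k, IsOpen (W k)) ∧ ⋃ k, W k = univ ∧ ∀ k, P (W k) := by
  obtain ⟨f, hfA⟩ := PartitionOfUnity.exists_isSubordinate_of_locallyFinite isClosed_univ A hAo
    (locallyFinite_of_finite _) hAc.ge
  obtain ⟨g, hgB⟩ := PartitionOfUnity.exists_isSubordinate_of_locallyFinite isClosed_univ B hBo
    (locallyFinite_of_finite _) hBc.ge
  let c : Fin (a + 1) × Fin (b + 1) → X → ℝ := fun p x => f p.1 x * g p.2 x
  have hc : ∀ p, Continuous (c p) := fun p => (f p.1).continuous.mul (g p.2).continuous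
  let Idx (k : ℕ) : Type := {q : Finset (Fin (a + 1)) × Finset (Fin (b + 1)) //
    q.1.Nonempty ∧ q.2.Nonempty ∧ #q.1 + #q.2 = k + 2}
  let piece (k : ℕ) (q : Idx k) : Set X := dominanceRegion c (q.1.1 ×ˢ q.1.2)
  have hpiece_subset (k : ℕ) (q : Idx k) : ∃ i j, piece k q ⊆ A i ∩ B j := by
    obtain ⟨i, hi⟩ := q.2.1
    obtain ⟨j, hj⟩ := q.2.2.1
    refine ⟨i, j, fun x hx => ?_⟩
    have hpos := (hx (i, j) (Finset.mk_mem_product hi hj)).1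
    exact ⟨hfA i (subset_tsupport _ (left_ne_zero_of_mul hpos.ne')),
      hgB j (subset_tsupport _ (right_ne_zero_of_mul hpos.ne'))⟩
  have hpiece_disjoint (k : ℕ) : Pairwise (Disjoint on piece k) := fun q q' hqq' =>
    disjoint_dominanceRegion_product q.2.1 q.2.2.1 q'.2.1 q'.2.2.1 (q.2.2.2.trans q'.2.2.2.symm)
      (Subtype.coe_injective.ne hqq')
  refine ⟨fun k => ⋃ q, piece k q, fun k => isOpen_iUnion fun q => isOpen_dominanceRegion hc _,
    eq_univ_of_forall fun x => ?_, fun k => hunion _ (fun q => isOpen_dominanceRegion hc _)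
      (hpiece_disjoint k) fun q => let ⟨i, j, h⟩ := hpiece_subset k q; hmono h (hP i j)⟩
  let S : Finset (Fin (a + 1)) := {i | ∀ s, f s x ≤ f i x}
  let T : Finset (Fin (b + 1)) := {j | ∀ t, g t x ≤ g j x}
  have hS : S.Nonempty := let ⟨i, hi⟩ := Finite.exists_max (f · x); ⟨i, by simpa [S] using hi⟩
  have hT : T.Nonempty := let ⟨j, hj⟩ := Finite.exists_max (g · x); ⟨j, by simpa [T] using hj⟩
  have hSc : #S ≤ a + 1 := by simpa using Finset.card_le_univ S
  have hTc : #T ≤ b + 1 := by simpa using Finset.card_le_univ T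
  have hSpos := Finset.card_pos.2 hS
  have hTpos := Finset.card_pos.2 hT
  refine mem_iUnion.2 ⟨⟨#S + #T - 2, by omega⟩,
    mem_iUnion.2 ⟨⟨(S, T), hS, hT, by dsimp only; omega⟩, ?_⟩⟩
  exact mem_dominanceRegion_mul (by simp [S]) (by simp [T]) (f.nonneg · x) (g.nonneg · x)
    (f.exists_pos (mem_univ x)) (g.exists_pos (mem_univ x))

theorem HasLocalSection.endpointsMap_succ {G : Type*} [TopologicalSpace G] [Group G]
    [IsTopologicalGroup G] {m : ℕ} {U : Set (Fin (m + 1) → G)} {V : Set G}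
    (hU : HasLocalSection (endpointsMap (m + 1) G) U)
    (hV : ContinuousMap.Homotopic ⟨fun v : V => (v : G), continuous_subtype_val⟩
      (ContinuousMap.const V 1)) :
    HasLocalSection (endpointsMap (m + 2) G)
      (Fin.init ⁻¹' U ∩ (fun w => (w 0)⁻¹ * w (Fin.last _)) ⁻¹' V) := by
  obtain ⟨s, hs⟩ := hU
  obtain ⟨H⟩ := hV
  set D := Fin.init ⁻¹' U ∩ (fun w : Fin (m + 2) → G => (w 0)⁻¹ * w (Fin.last _)) ⁻¹' V
  let front : C(D, U) := ⟨fun w => ⟨Fin.init w.1, w.2.1⟩,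
    Continuous.subtype_mk (continuous_pi fun k => (continuous_apply k.castSucc).comp
      continuous_subtype_val : Continuous fun w : D => Fin.init w.1) _⟩
  let quot : C(D, V) := ⟨fun w => ⟨(w.1 0)⁻¹ * w.1 (Fin.last _), w.2.2⟩,
    Continuous.subtype_mk (((continuous_apply 0).comp continuous_subtype_val).inv.mul
      ((continuous_apply _).comp continuous_subtype_val) :
        Continuous fun w : D => (w.1 0)⁻¹ * w.1 (Fin.last _)) _⟩
  let back : C(V, C(I, G)) :=
    (H.toContinuousMap.comp ⟨fun p : V × I => (σ p.2, p.1), by fun_prop⟩).curry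
  let sf : C(D, MultiPath (m + 1) G) := s.comp front
  let paths (w : D) : Fin (m + 2) → C(I, G) := Fin.snoc (sf w).1 ((sf w).1 0 * back (quot w))
  have paths_zero (w : D) (k : Fin (m + 2)) : paths w k 0 = (sf w).1 0 0 := by
    induction k using Fin.lastCases with
    | last => simp [paths, back]
    | cast k => simpa [paths] using (sf w).2 k 0
  refine ⟨⟨fun w => ⟨paths w, fun i j => (paths_zero w i).trans (paths_zero w j).symm⟩,
    ?_⟩, fun w => funext fun k => ?_⟩
  · exact (Continuous.finSnoc (continuous_subtype_val.comp sf.continuous)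
      (((continuous_apply 0).comp (continuous_subtype_val.comp sf.continuous)).mul
        (back.continuous.comp quot.continuous))).subtype_mk _
  · have hfront (k : Fin (m + 1)) : (sf w).1 k 1 = w.1 k.castSucc :=
      congrFun (hs (front w)) k
    induction k using Fin.lastCases with
    | last => simp [endpointsMap, paths, back, hfront, quot]
    | cast k => simp [endpointsMap, paths, hfront]

theorem secatLE_endpointsMap_succ {G : Type*} [TopologicalSpace G] [Group G]
    [IsTopologicalGroup G] [PathConnectedSpace G] {m a b : ℕ} [NormalSpace (Fin (m + 2) → G)]
    (hcat : catLE G a) (hTC : secatLE (endpointsMap (m + 1) G) b) :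
    secatLE (endpointsMap (m + 2) G) (a + b) := by
  obtain ⟨V, hVo, hVc, hV⟩ := hcat
  obtain ⟨U, hUo, hUc, hU⟩ := hTC
  let q : C(Fin (m + 2) → G, G) := ⟨fun w => (w 0)⁻¹ * w (Fin.last _), by fun_prop⟩
  have hinit : Continuous (Fin.init : (Fin (m + 2) → G) → Fin (m + 1) → G) :=
    continuous_pi fun k => continuous_apply k.castSucc
  refine exists_open_cover_of_inter_cover (HasLocalSection (endpointsMap (m + 2) G))
    (fun hST hT => hT.mono hST) (fun t ht hd hs => HasLocalSection.iUnion ht hd hs)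
    (fun j => q ⁻¹' V j) (fun i => Fin.init ⁻¹' U i) (fun j => (hVo j).preimage q.continuous)
    (fun i => (hUo i).preimage hinit) (by simp [← preimage_iUnion, hVc])
    (by simp [← preimage_iUnion, hUc]) fun j i => ?_
  obtain ⟨y, hy⟩ := hV j
  have hV1 := hy.trans ⟨(PathConnectedSpace.somePath y 1).toHomotopyConst⟩
  rw [inter_comm]
  exact HasLocalSection.endpointsMap_succ (hU i) hV1

theorem sInf_natCast_image_le_add {P Q R : Set ℕ} (h : ∀ a ∈ P, ∀ b ∈ Q, a + b ∈ R) :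
    sInf ((fun k : ℕ => (k : ℕ∞)) '' R) ≤
      sInf ((fun k : ℕ => (k : ℕ∞)) '' P) + sInf ((fun k : ℕ => (k : ℕ∞)) '' Q) := by
  rcases P.eq_empty_or_nonempty with rfl | hP
  · simp
  rcases Q.eq_empty_or_nonempty with rfl | hQ
  · simp
  simp only [sInf_image]
  rw [← ENat.natCast_sInf hP, ← ENat.natCast_sInf hQ, ← Nat.cast_add]
  exact biInf_le _ (h _ (Nat.sInf_mem hP) _ (Nat.sInf_mem hQ))

theorem TC_succ_diff_le_cat_of_group_general (n : ℕ) (hn : 3 ≤ n) (G : Type*) [TopologicalSpace G]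
    [Group G] [IsTopologicalGroup G] [PathConnectedSpace G]
    (hnorm : ∀ k : ℕ, NormalSpace (Fin k → G)) :
    TCn n G - TCn (n - 1) G ≤ LScat G := by
  obtain ⟨m, rfl⟩ : ∃ m, n = m + 2 := ⟨n - 2, by omega⟩
  have := hnorm (m + 2)
  rw [tsub_le_iff_right]
  exact sInf_natCast_image_le_add fun a ha b hb => secatLE_endpointsMap_succ ha hb

/-- For a path-connected topological group `G` all of whose finite cartesian
powers are normal (Hausdorff) spaces, and `n ≥ 3`: `TC_n(G) − TC_{n-1}(G) ≤ cat(G)`. -/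
theorem TC_succ_diff_le_cat_of_group (n : ℕ) (hn : 3 ≤ n) (G : Type*) [TopologicalSpace G]
    [Group G] [IsTopologicalGroup G] [PathConnectedSpace G]
    (hnorm : ∀ k : ℕ, NormalSpace (Fin k → G)) (hT2 : ∀ k : ℕ, T2Space (Fin k → G)) :
    TCn n G - TCn (n - 1) G ≤ LScat G :=
  TC_succ_diff_le_cat_of_group_general n hn G hnorm
end
end

section
/- The symmetrized topological complexity TC^Σ_n is a homotopy invariant: if X and Y are homotopy equivalent path-connected spaces, then TC^Σ_n(X) = TC^Σ_n(Y) for all n ≥ 2. -/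
noncomputable section


/-- `symTCLE n X k` : `X^n` is covered by `k+1` open, `Σ_n`-invariant subsets, each admitting
a continuous `Σ_n`-equivariant section of the evaluation fibration `e_n`. -/
def symTCLE (n : ℕ) (X : Type*) [TopologicalSpace X] (k : ℕ) : Prop :=
  ∃ A : Fin (k + 1) → Set (Fin n → X),
    (∀ i, IsOpen (A i)) ∧ (⋃ i, A i) = Set.univ ∧
    ∀ i, ∃ hinv : ∀ (σ : Equiv.Perm (Fin n)) (x : Fin n → X), x ∈ A i → x ∘ σ ∈ A i,
      ∃ s : C(A i, MultiPath n X),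
        (∀ x : A i, endpointsMap n X (s x) = (x : Fin n → X)) ∧
        ∀ (σ : Equiv.Perm (Fin n)) (x : Fin n → X) (hx : x ∈ A i),
          (s ⟨x ∘ σ, hinv σ x hx⟩).1 = fun j => (s ⟨x, hx⟩).1 (σ j)

/-- The symmetrized `n`-th topological complexity `TC^Σ_n`. -/
def symTC (n : ℕ) (X : Type*) [TopologicalSpace X] : ℕ∞ :=
  sInf ((fun k : ℕ => (k : ℕ∞)) '' {k | symTCLE n X k})


/-! A path in `Y` ending at `φ x` is sent by `ψ` to a path ending at `ψ (φ x)`, which the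
homotopy `H : ψ ∘ φ ≃ id` carries back to `x`. Doing this to every leg of a multipath turns
local sections of `e_n` over `Y^n` into local sections over `X^n`, preserving
`Σ_n`-equivariance because the construction acts legwise. So `TC^Σ_n` can only drop along a
homotopy domination. -/

namespace ContinuousMap.Homotopy

variable {X Y : Type*} [TopologicalSpace X] [TopologicalSpace Y] {φ : C(X, Y)} {ψ : C(Y, X)}
  {n : ℕ} (H : (ψ.comp φ).Homotopy (ContinuousMap.id X))

def retractPath (γ : C(unitInterval, Y)) (x : X) (hγ : γ 1 = φ x) : C(unitInterval, X) :=
  ((⟨ψ.comp γ, rfl, by simp [hγ]⟩ : Path (ψ (γ 0)) (ψ (φ x))).trans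
    (H.evalAt x)).toContinuousMap

@[simp]
lemma retractPath_zero (γ : C(unitInterval, Y)) (x : X) (hγ : γ 1 = φ x) :
    H.retractPath γ x hγ 0 = ψ (γ 0) :=
  Path.source _

@[simp]
lemma retractPath_one (γ : C(unitInterval, Y)) (x : X) (hγ : γ 1 = φ x) :
    H.retractPath γ x hγ 1 = x :=
  Path.target _

lemma retractPath_congr {γ γ' : C(unitInterval, Y)} {x x' : X} (hγ : γ = γ') (hx : x = x')
    {h : γ 1 = φ x} {h' : γ' 1 = φ x'} : H.retractPath γ x h = H.retractPath γ' x' h' := by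
  subst hγ hx
  rfl

lemma continuous_retractPath {Z : Type*} [TopologicalSpace Z] {γ : Z → C(unitInterval, Y)}
    {x : Z → X} (hγ : Continuous γ) (hx : Continuous x) (h : ∀ z, γ z 1 = φ (x z)) :
    Continuous fun z => H.retractPath (γ z) (x z) (h z) := by
  refine ContinuousMap.continuous_of_continuous_uncurry _ ?_
  refine Path.trans_continuous_family
    (fun z => (⟨ψ.comp (γ z), rfl, by simp [h z]⟩ : Path (ψ (γ z 0)) (ψ (φ (x z)))))
    ?_ (fun z => H.evalAt (x z)) ?_
  · exact ψ.continuous.comp (continuous_eval.comp (hγ.prodMap continuous_id))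
  · exact H.continuous.comp (continuous_snd.prodMk (hx.comp continuous_fst))

def retractMultiPath (f : MultiPath n Y) (x : Fin n → X)
    (hf : ∀ j, f.1 j 1 = φ (x j)) : MultiPath n X :=
  ⟨fun j => H.retractPath (f.1 j) (x j) (hf j), fun i j => by
    simp only [retractPath_zero, f.2 i j]⟩

lemma endpointsMap_retractMultiPath (f : MultiPath n Y) (x : Fin n → X)
    (hf : ∀ j, f.1 j 1 = φ (x j)) : endpointsMap n X (H.retractMultiPath f x hf) = x :=
  funext fun j => H.retractPath_one _ _ (hf j)

lemma retractMultiPath_comp {f f' : MultiPath n Y} {x : Fin n → X} (σ : Fin n → Fin n)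
    (hf' : f'.1 = fun j => f.1 (σ j)) {h : ∀ j, f.1 j 1 = φ (x j)}
    {h' : ∀ j, f'.1 j 1 = φ (x (σ j))} :
    (H.retractMultiPath f' (x ∘ σ) h').1 = fun j => (H.retractMultiPath f x h).1 (σ j) :=
  funext fun j => H.retractPath_congr (h := h' j) (h' := h (σ j)) (congrFun hf' j) rfl

lemma continuous_retractMultiPath {Z : Type*} [TopologicalSpace Z]
    {f : Z → MultiPath n Y} {x : Z → Fin n → X} (hf : Continuous f) (hx : Continuous x)
    (h : ∀ z j, (f z).1 j 1 = φ (x z j)) :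
    Continuous fun z => H.retractMultiPath (f z) (x z) (h z) :=
  Continuous.subtype_mk (continuous_pi fun j => H.continuous_retractPath
    ((continuous_apply j).comp (continuous_subtype_val.comp hf))
    ((continuous_apply j).comp hx) _) _

end ContinuousMap.Homotopy

lemma symTCLE_of_homotopic_comp_id {X Y : Type*} [TopologicalSpace X] [TopologicalSpace Y]
    {n k : ℕ} (φ : C(X, Y)) (ψ : C(Y, X)) (hψφ : (ψ.comp φ).Homotopic (ContinuousMap.id X))
    (hY : symTCLE n Y k) : symTCLE n X k := by
  obtain ⟨H⟩ := hψφ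
  obtain ⟨A, hA_open, hA_cover, hA_sec⟩ := hY
  let Φ : C(Fin n → X, Fin n → Y) := ContinuousMap.pi fun j => φ.comp (ContinuousMap.eval j)
  refine ⟨fun i => Φ ⁻¹' A i, fun i => (hA_open i).preimage Φ.continuous, ?_, fun i => ?_⟩
  · rw [← Set.preimage_iUnion, hA_cover, Set.preimage_univ]
  obtain ⟨hinv, s, hs_sec, hs_equiv⟩ := hA_sec i
  let sΦ : C(Φ ⁻¹' A i, MultiPath n Y) := s.comp (Φ.restrictPreimage (A i))
  refine ⟨fun σ x hx => hinv σ (Φ x) hx,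
    ⟨fun b => H.retractMultiPath (sΦ b) b (congrFun (hs_sec (Φ.restrictPreimage (A i) b))),
      H.continuous_retractMultiPath sΦ.continuous continuous_subtype_val _⟩,
    fun b => H.endpointsMap_retractMultiPath _ _ _,
    fun σ x hx => H.retractMultiPath_comp σ (hs_equiv σ (Φ x) hx)⟩

lemma symTC_le_of_homotopic_comp_id {X Y : Type*} [TopologicalSpace X] [TopologicalSpace Y]
    (n : ℕ) (φ : C(X, Y)) (ψ : C(Y, X)) (hψφ : (ψ.comp φ).Homotopic (ContinuousMap.id X)) :
    symTC n X ≤ symTC n Y :=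
  sInf_le_sInf (Set.image_mono fun _ => symTCLE_of_homotopic_comp_id φ ψ hψφ)

theorem symTC_homotopy_invariant_general (n : ℕ) (X Y : Type*) [TopologicalSpace X]
    [TopologicalSpace Y] (h : Nonempty (ContinuousMap.HomotopyEquiv X Y)) :
    symTC n X = symTC n Y := by
  obtain ⟨e⟩ := h
  exact le_antisymm (symTC_le_of_homotopic_comp_id n e.toFun e.invFun e.left_inv)
    (symTC_le_of_homotopic_comp_id n e.invFun e.toFun e.right_inv)

/-- `TC^Σ_n` is a homotopy invariant: homotopy equivalent path-connected
spaces have the same symmetrized `n`-th topological complexity (`n ≥ 2`). -/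
theorem symTC_homotopy_invariant (n : ℕ) (hn : 2 ≤ n) (X Y : Type*) [TopologicalSpace X]
    [TopologicalSpace Y] [PathConnectedSpace X] [PathConnectedSpace Y]
    (h : Nonempty (ContinuousMap.HomotopyEquiv X Y)) :
    symTC n X = symTC n Y :=
  symTC_homotopy_invariant_general n X Y h
end
end
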